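/- arXiv:2604.14107 — 6 statements merged into one kernel-verified Lean document; each statement's English description precedes it below -/
import Mathlib

section
/- Bound preservation of the Zalesak-limited FCT update: for every node i, the flux-corrected value θ_i^{n+1} = θ_i^L + (Δt/m_i) Σ_{j≠i} α_ij f_ij satisfies θ_i^min ≤ θ_i^{n+1} ≤ θ_i^max. -/
/-- **Bound preservation of the Zalesak-limited FCT update.**
For every node `i`, the flux-corrected value
`θ_i^{n+1} = θ_i^L + (Δt/m_i) Σ_{j≠i} α_ij f_ij`
satisfies `θ_i^min ≤ θ_i^{n+1} ≤ θ_i^max`. -/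
theorem fct_zalesak_bound_preservation
    (N : ℕ)
    (m θL θmin θmax : Fin N → ℝ) (Δt : ℝ)
    (f : Fin N → Fin N → ℝ)
    (Pp Pm Qp Qm Rp Rm : Fin N → ℝ)
    (α : Fin N → Fin N → ℝ)
    (θnew : Fin N → ℝ)
    (hm : ∀ i, 0 < m i) (hΔt : 0 < Δt)
    (hskew : ∀ i j, i ≠ j → f j i = - f i j)
    (hlow : ∀ i, θmin i ≤ θL i) (hhigh : ∀ i, θL i ≤ θmax i)
    (hPp : ∀ i, Pp i = ∑ j ∈ Finset.univ.erase i, max (f i j) 0)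
    (hPm : ∀ i, Pm i = ∑ j ∈ Finset.univ.erase i, min (f i j) 0)
    (hQp : ∀ i, Qp i = m i / Δt * (θmax i - θL i))
    (hQm : ∀ i, Qm i = m i / Δt * (θmin i - θL i))
    (hRp : ∀ i, Rp i = if 0 < Pp i then min 1 (Qp i / Pp i) else 1)
    (hRm : ∀ i, Rm i = if Pm i < 0 then min 1 (Qm i / Pm i) else 1)
    (hα : ∀ i j, α i j =
      if 0 < f i j then min (Rp i) (Rm j)
      else if f i j < 0 then min (Rm i) (Rp j)
      else 1)
    (hθnew : ∀ i, θnew i = θL i + Δt / m i * ∑ j ∈ Finset.univ.erase i, α i j * f i j) :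
    ∀ i, θmin i ≤ θnew i ∧ θnew i ≤ θmax i := by
  have hQp0 : ∀ k, 0 ≤ Qp k := by
    intro k; rw [hQp]
    exact mul_nonneg (le_of_lt (div_pos (hm k) hΔt)) (by linarith [hhigh k])
  have hQm0 : ∀ k, Qm k ≤ 0 := by
    intro k; rw [hQm]
    exact mul_nonpos_of_nonneg_of_nonpos (le_of_lt (div_pos (hm k) hΔt)) (by linarith [hlow k])
  have hRp0 : ∀ k, 0 ≤ Rp k := by
    intro k; rw [hRp]; split_ifs with h
    · exact le_min one_pos.le (div_nonneg (hQp0 k) h.le)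
    · exact zero_le_one
  have hRp1 : ∀ k, Rp k ≤ 1 := by
    intro k; rw [hRp]; split_ifs with h
    · exact min_le_left _ _
    · exact le_refl 1
  have hRm0 : ∀ k, 0 ≤ Rm k := by
    intro k; rw [hRm]; split_ifs with h
    · refine le_min one_pos.le ?_
      have h2 := div_nonneg (neg_nonneg.mpr (hQm0 k)) (neg_nonneg.mpr h.le)
      rwa [neg_div_neg_eq] at h2
    · exact zero_le_one
  have hRm1 : ∀ k, Rm k ≤ 1 := by
    intro k; rw [hRm]; split_ifs with h
    · exact min_le_left _ _
    · exact le_refl 1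
  intro i
  have hmi := hm i
  -- termwise bounds
  have hup : ∀ j ∈ Finset.univ.erase i, α i j * f i j ≤ Rp i * max (f i j) 0 := by
    intro j _
    rw [hα]
    split_ifs with h1 h2
    · rw [max_eq_left h1.le]
      exact mul_le_mul_of_nonneg_right (min_le_left _ _) h1.le
    · rw [max_eq_right h2.le, mul_zero]
      exact mul_nonpos_of_nonneg_of_nonpos (le_min (hRm0 i) (hRp0 j)) h2.le
    · have : f i j = 0 := le_antisymm (not_lt.mp h1) (not_lt.mp h2)
      simp [this]
  have hdn : ∀ j ∈ Finset.univ.erase i, Rm i * min (f i j) 0 ≤ α i j * f i j := by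
    intro j _
    rw [hα]
    split_ifs with h1 h2
    · rw [min_eq_right h1.le, mul_zero]
      exact mul_nonneg (le_min (hRp0 i) (hRm0 j)) h1.le
    · rw [min_eq_left h2.le]
      exact mul_le_mul_of_nonpos_right (min_le_left _ _) h2.le
    · have : f i j = 0 := le_antisymm (not_lt.mp h1) (not_lt.mp h2)
      simp [this]
  have hSup : (∑ j ∈ Finset.univ.erase i, α i j * f i j) ≤ Rp i * Pp i := by
    rw [hPp, Finset.mul_sum]
    exact Finset.sum_le_sum hup
  have hSdn : Rm i * Pm i ≤ ∑ j ∈ Finset.univ.erase i, α i j * f i j := by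
    rw [hPm, Finset.mul_sum]
    exact Finset.sum_le_sum hdn
  have hPp0 : 0 ≤ Pp i := by
    rw [hPp]; exact Finset.sum_nonneg fun j _ => le_max_right _ _
  have hPm0 : Pm i ≤ 0 := by
    rw [hPm]; exact Finset.sum_nonpos fun j _ => min_le_right _ _
  have hRpPp : Rp i * Pp i ≤ Qp i := by
    rcases lt_or_eq_of_le hPp0 with h | h
    · have : Rp i ≤ Qp i / Pp i := by
        rw [hRp, if_pos h]; exact min_le_right _ _
      calc Rp i * Pp i ≤ (Qp i / Pp i) * Pp i := mul_le_mul_of_nonneg_right this h.le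
        _ = Qp i := div_mul_cancel₀ _ (ne_of_gt h)
    · rw [← h, mul_zero]; exact hQp0 i
  have hRmPm : Qm i ≤ Rm i * Pm i := by
    rcases lt_or_eq_of_le hPm0 with h | h
    · have : Rm i ≤ Qm i / Pm i := by
        rw [hRm, if_pos h]; exact min_le_right _ _
      calc Qm i = (Qm i / Pm i) * Pm i := (div_mul_cancel₀ _ (ne_of_lt h)).symm
        _ ≤ Rm i * Pm i := mul_le_mul_of_nonpos_right this h.le
    · rw [h, mul_zero]; exact hQm0 i
  have hSup' : (∑ j ∈ Finset.univ.erase i, α i j * f i j) ≤ Qp i := hSup.trans hRpPp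
  have hSdn' : Qm i ≤ ∑ j ∈ Finset.univ.erase i, α i j * f i j := hRmPm.trans hSdn
  rw [hQp] at hSup'
  rw [hQm] at hSdn'
  constructor
  · rw [hθnew]
    have := mul_le_mul_of_nonneg_left hSdn' (le_of_lt (div_pos hΔt hmi))
    have heq : Δt / m i * (m i / Δt * (θmin i - θL i)) = θmin i - θL i := by
      field_simp
    rw [heq] at this
    linarith
  · rw [hθnew]
    have := mul_le_mul_of_nonneg_left hSup' (le_of_lt (div_pos hΔt hmi))
    have heq : Δt / m i * (m i / Δt * (θmax i - θL i)) = θmax i - θL i := by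
      field_simp
    rw [heq] at this
    linarith
end

section
/- Intermediate limiter inequalities: for every node i, the limited fluxes satisfy Σ_{j≠i} max(α_ij f_ij, 0) ≤ Q_i^+ and Σ_{j≠i} min(α_ij f_ij, 0) ≥ Q_i^-, and moreover 0 ≤ R_i^± ≤ 1 and 0 ≤ α_ij ≤ 1 for all i, j. -/
/-- **Intermediate limiter inequalities.**
For every node `i`, the limited fluxes satisfy
`Σ_{j≠i} max(α_ij f_ij, 0) ≤ Q_i^+` and `Σ_{j≠i} min(α_ij f_ij, 0) ≥ Q_i^-`,
and moreover `0 ≤ R_i^± ≤ 1` and `0 ≤ α_ij ≤ 1` for all `i, j`. -/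
theorem fct_zalesak_intermediate_inequalities
    (N : ℕ)
    (m θL θmin θmax : Fin N → ℝ) (Δt : ℝ)
    (f : Fin N → Fin N → ℝ)
    (Pp Pm Qp Qm Rp Rm : Fin N → ℝ)
    (α : Fin N → Fin N → ℝ)
    (hm : ∀ i, 0 < m i) (hΔt : 0 < Δt)
    (hskew : ∀ i j, i ≠ j → f j i = - f i j)
    (hlow : ∀ i, θmin i ≤ θL i) (hhigh : ∀ i, θL i ≤ θmax i)
    (hPp : ∀ i, Pp i = ∑ j ∈ Finset.univ.erase i, max (f i j) 0)
    (hPm : ∀ i, Pm i = ∑ j ∈ Finset.univ.erase i, min (f i j) 0)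
    (hQp : ∀ i, Qp i = m i / Δt * (θmax i - θL i))
    (hQm : ∀ i, Qm i = m i / Δt * (θmin i - θL i))
    (hRp : ∀ i, Rp i = if 0 < Pp i then min 1 (Qp i / Pp i) else 1)
    (hRm : ∀ i, Rm i = if Pm i < 0 then min 1 (Qm i / Pm i) else 1)
    (hα : ∀ i j, α i j =
      if 0 < f i j then min (Rp i) (Rm j)
      else if f i j < 0 then min (Rm i) (Rp j)
      else 1) :
    ∀ i,
      (∑ j ∈ Finset.univ.erase i, max (α i j * f i j) 0 ≤ Qp i) ∧
      (Qm i ≤ ∑ j ∈ Finset.univ.erase i, min (α i j * f i j) 0) ∧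
      (0 ≤ Rp i ∧ Rp i ≤ 1) ∧ (0 ≤ Rm i ∧ Rm i ≤ 1) ∧
      (∀ j, 0 ≤ α i j ∧ α i j ≤ 1) := by
  have hQp0 : ∀ i, 0 ≤ Qp i := fun i => by
    rw [hQp]
    exact mul_nonneg (le_of_lt (div_pos (hm i) hΔt)) (by linarith [hhigh i])
  have hQm0 : ∀ i, Qm i ≤ 0 := fun i => by
    rw [hQm]
    exact mul_nonpos_of_nonneg_of_nonpos (le_of_lt (div_pos (hm i) hΔt))
      (by linarith [hlow i])
  have hRpb : ∀ i, 0 ≤ Rp i ∧ Rp i ≤ 1 := fun i => by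
    rw [hRp]
    split_ifs with h
    · exact ⟨le_min zero_le_one (div_nonneg (hQp0 i) h.le), min_le_left _ _⟩
    · exact ⟨zero_le_one, le_refl 1⟩
  have hRmb : ∀ i, 0 ≤ Rm i ∧ Rm i ≤ 1 := fun i => by
    rw [hRm]
    split_ifs with h
    · exact ⟨le_min zero_le_one (div_nonneg_of_nonpos (hQm0 i) h.le),
        min_le_left _ _⟩
    · exact ⟨zero_le_one, le_refl 1⟩
  have hαb : ∀ i j, 0 ≤ α i j ∧ α i j ≤ 1 := fun i j => by
    rw [hα]
    split_ifs with h1 h2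
    · exact ⟨le_min (hRpb i).1 (hRmb j).1, le_trans (min_le_left _ _) (hRpb i).2⟩
    · exact ⟨le_min (hRmb i).1 (hRpb j).1, le_trans (min_le_left _ _) (hRmb i).2⟩
    · exact ⟨zero_le_one, le_refl 1⟩
  have hPp0 : ∀ i, 0 ≤ Pp i := fun i => by
    rw [hPp]
    exact Finset.sum_nonneg fun j _ => le_max_right _ _
  have hPm0 : ∀ i, Pm i ≤ 0 := fun i => by
    rw [hPm]
    exact Finset.sum_nonpos fun j _ => min_le_right _ _
  intro i
  refine ⟨?_, ?_, hRpb i, hRmb i, hαb i⟩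
  · -- upper bound
    have step1 : ∑ j ∈ Finset.univ.erase i, max (α i j * f i j) 0
        ≤ Rp i * Pp i := by
      rw [hPp, Finset.mul_sum]
      refine Finset.sum_le_sum fun j _ => ?_
      rcases lt_trichotomy (f i j) 0 with hf | hf | hf
      · have hα0 : α i j * f i j ≤ 0 :=
          mul_nonpos_of_nonneg_of_nonpos (hαb i j).1 hf.le
        rw [max_eq_right hα0, max_eq_right hf.le, mul_zero]
      · simp [hf]
      · have hαle : α i j ≤ Rp i := by
          rw [hα]; simp only [if_pos hf]; exact min_le_left _ _
        have : α i j * f i j ≤ Rp i * f i j :=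
          mul_le_mul_of_nonneg_right hαle hf.le
        rw [max_eq_left hf.le]
        exact le_trans (max_le this (mul_nonneg (hRpb i).1 hf.le)) (le_refl _)
    refine le_trans step1 ?_
    rcases lt_or_eq_of_le (hPp0 i) with h | h
    · have hRple : Rp i ≤ Qp i / Pp i := by
        rw [hRp, if_pos h]; exact min_le_right _ _
      calc Rp i * Pp i ≤ (Qp i / Pp i) * Pp i :=
            mul_le_mul_of_nonneg_right hRple h.le
        _ = Qp i := by field_simp
    · rw [← h, mul_zero]; exact hQp0 i
  · -- lower bound
    have step1 : Rm i * Pm i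
        ≤ ∑ j ∈ Finset.univ.erase i, min (α i j * f i j) 0 := by
      rw [hPm, Finset.mul_sum]
      refine Finset.sum_le_sum fun j _ => ?_
      rcases lt_trichotomy (f i j) 0 with hf | hf | hf
      · have hαle : α i j ≤ Rm i := by
          rw [hα]
          simp only [if_neg (not_lt.mpr hf.le), if_pos hf]
          exact min_le_left _ _
        have h1 : Rm i * f i j ≤ α i j * f i j :=
          mul_le_mul_of_nonpos_right hαle hf.le
        have h2 : Rm i * f i j ≤ 0 :=
          mul_nonpos_of_nonneg_of_nonpos (hRmb i).1 hf.le
        rw [min_eq_left hf.le]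
        exact le_min h1 h2
      · simp [hf]
      · have hα0 : 0 ≤ α i j * f i j := mul_nonneg (hαb i j).1 hf.le
        rw [min_eq_right hα0, min_eq_right hf.le, mul_zero]
    refine le_trans ?_ step1
    rcases lt_or_eq_of_le (hPm0 i) with h | h
    · have hRmle : Rm i ≤ Qm i / Pm i := by
        rw [hRm, if_pos h]; exact min_le_right _ _
      calc Qm i = (Qm i / Pm i) * Pm i := by rw [div_mul_cancel₀ _ (ne_of_lt h)]
        _ ≤ Rm i * Pm i := mul_le_mul_of_nonpos_right hRmle h.le
    · rw [h, mul_zero]; exact hQm0 i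
end

section
/- Discrete maximum principle for the fully implicit low-order scheme: let m_i > 0, Δt > 0, let A ∈ ℝ^{N×N} satisfy A_ij ≤ 0 for all i ≠ j and Σ_j A_ij = 0 for every i, let θ : ℝ → ℝ be strictly increasing, and let z ∈ ℝ^N be fixed nodal elevations. If ψ ∈ ℝ^N solves the nonlinear system m_i (θ(ψ_i) − θ(ψ_i^n)) + Δt Σ_j A_ij (ψ_j + z_j) = 0 for all i, then the total head φ_i = ψ_i + z_i satisfies both max_i φ_i ≤ max_i (ψ_i^n + z_i) and min_i φ_i ≥ min_i (ψ_i^n + z_i). -/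
lemma sup'_neg_eq_neg_inf' {N : ℕ} (hN : 0 < N) (f : Fin N → ℝ) :
    Finset.univ.sup' ⟨⟨0, hN⟩, Finset.mem_univ _⟩ (fun i => -f i) =
      -Finset.univ.inf' ⟨⟨0, hN⟩, Finset.mem_univ _⟩ f := by
  apply le_antisymm
  · apply Finset.sup'_le
    intro i _
    simp only [neg_le_neg_iff]
    exact Finset.inf'_le _ (Finset.mem_univ i)
  · obtain ⟨i, -, hi⟩ := Finset.exists_mem_eq_inf'
      (⟨⟨0, hN⟩, Finset.mem_univ _⟩ : (Finset.univ : Finset (Fin N)).Nonempty) f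
    rw [hi]
    exact Finset.le_sup' (fun i => -f i) (Finset.mem_univ i)

lemma dmp_aux
    (N : ℕ) (hN : 0 < N)
    (m : Fin N → ℝ) (Δt : ℝ)
    (A : Matrix (Fin N) (Fin N) ℝ)
    (θ : ℝ → ℝ) (z ψ ψn : Fin N → ℝ)
    (hm : ∀ i, 0 < m i) (hΔt : 0 < Δt)
    (hAoff : ∀ i j, i ≠ j → A i j ≤ 0)
    (hArow : ∀ i, ∑ j, A i j = 0)
    (hθ : StrictMono θ)
    (hsolve : ∀ i, m i * (θ (ψ i) - θ (ψn i)) + Δt * ∑ j, A i j * (ψ j + z j) = 0) :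
    (Finset.univ.sup' ⟨⟨0, hN⟩, Finset.mem_univ _⟩ (fun i => ψ i + z i) ≤
      Finset.univ.sup' ⟨⟨0, hN⟩, Finset.mem_univ _⟩ (fun i => ψn i + z i)) := by
  have ne : (Finset.univ : Finset (Fin N)).Nonempty := ⟨⟨0, hN⟩, Finset.mem_univ _⟩
  obtain ⟨i, -, hi⟩ := Finset.exists_mem_eq_sup' ne (fun i => ψ i + z i)
  have hmax : ∀ j, ψ j + z j ≤ ψ i + z i := by
    intro j
    rw [← hi]
    exact Finset.le_sup' (fun i => ψ i + z i) (Finset.mem_univ j)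
  have hS : 0 ≤ ∑ j, A i j * (ψ j + z j) := by
    have key : ∑ j, A i j * ((ψ j + z j) - (ψ i + z i)) = ∑ j, A i j * (ψ j + z j) := by
      simp only [mul_sub]
      rw [Finset.sum_sub_distrib, ← Finset.sum_mul, hArow, zero_mul, sub_zero]
    rw [← key]
    apply Finset.sum_nonneg
    intro j _
    rcases eq_or_ne i j with rfl | hij
    · simp
    · have h1 := hAoff i j hij
      have h2 := hmax j
      nlinarith
  have hle : θ (ψ i) ≤ θ (ψn i) := by
    have := hsolve i
    nlinarith [hm i]
  have : ψ i ≤ ψn i := hθ.le_iff_le.mp hle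
  have : Finset.univ.sup' ne (fun i => ψ i + z i) ≤
      Finset.univ.sup' ne (fun i => ψn i + z i) := by
    rw [hi]
    calc ψ i + z i ≤ ψn i + z i := by linarith
      _ ≤ _ := Finset.le_sup' (fun i => ψn i + z i) (Finset.mem_univ i)
  exact this

/-- **Discrete maximum principle for the fully implicit low-order scheme.**
Let `m_i > 0`, `Δt > 0`, let `A` satisfy `A_ij ≤ 0` for `i ≠ j` and zero row
sums, let `θ` be strictly increasing, and let `z` be fixed nodal elevations.
If `ψ` solves `m_i (θ(ψ_i) - θ(ψ_i^n)) + Δt Σ_j A_ij (ψ_j + z_j) = 0` for all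
`i`, then the total head `φ_i = ψ_i + z_i` satisfies
`max_i φ_i ≤ max_i (ψ_i^n + z_i)` and `min_i φ_i ≥ min_i (ψ_i^n + z_i)`. -/
theorem low_order_discrete_maximum_principle
    (N : ℕ) (hN : 0 < N)
    (m : Fin N → ℝ) (Δt : ℝ)
    (A : Matrix (Fin N) (Fin N) ℝ)
    (θ : ℝ → ℝ) (z ψ ψn : Fin N → ℝ)
    (hm : ∀ i, 0 < m i) (hΔt : 0 < Δt)
    (hAoff : ∀ i j, i ≠ j → A i j ≤ 0)
    (hArow : ∀ i, ∑ j, A i j = 0)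
    (hθ : StrictMono θ)
    (hsolve : ∀ i, m i * (θ (ψ i) - θ (ψn i)) + Δt * ∑ j, A i j * (ψ j + z j) = 0) :
    (Finset.univ.sup' ⟨⟨0, hN⟩, Finset.mem_univ _⟩ (fun i => ψ i + z i) ≤
      Finset.univ.sup' ⟨⟨0, hN⟩, Finset.mem_univ _⟩ (fun i => ψn i + z i)) ∧
    (Finset.univ.inf' ⟨⟨0, hN⟩, Finset.mem_univ _⟩ (fun i => ψn i + z i) ≤
      Finset.univ.inf' ⟨⟨0, hN⟩, Finset.mem_univ _⟩ (fun i => ψ i + z i)) := by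
  constructor
  · exact dmp_aux N hN m Δt A θ z ψ ψn hm hΔt hAoff hArow hθ hsolve
  · have h := dmp_aux N hN m Δt A (fun x => -θ (-x)) (fun i => -z i)
      (fun i => -ψ i) (fun i => -ψn i) hm hΔt hAoff hArow
      (fun x y hxy => by simpa using hθ (neg_lt_neg hxy))
      (fun i => by
        simp only [neg_neg]
        have e : ∑ j, A i j * (-ψ j + -z j) = -∑ j, A i j * (ψ j + z j) := by
          rw [← Finset.sum_neg_distrib]
          exact Finset.sum_congr rfl (fun j _ => by ring)
        rw [e]
        have := hsolve i
        ring_nf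
        ring_nf at this
        linarith)
    have h1 : Finset.univ.sup' ⟨⟨0, hN⟩, Finset.mem_univ _⟩ (fun i => -ψ i + -z i)
        = -Finset.univ.inf' ⟨⟨0, hN⟩, Finset.mem_univ _⟩ (fun i => ψ i + z i) := by
      rw [← sup'_neg_eq_neg_inf' hN (fun i => ψ i + z i)]
      exact Finset.sup'_congr _ rfl (fun i _ => by ring)
    have h2 : Finset.univ.sup' ⟨⟨0, hN⟩, Finset.mem_univ _⟩ (fun i => -ψn i + -z i)
        = -Finset.univ.inf' ⟨⟨0, hN⟩, Finset.mem_univ _⟩ (fun i => ψn i + z i) := by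
      rw [← sup'_neg_eq_neg_inf' hN (fun i => ψn i + z i)]
      exact Finset.sup'_congr _ rfl (fun i _ => by ring)
    rw [h1, h2] at h
    linarith
end

section
/- Kirchhoff linearization of Richards' equation under Gardner closures: let α > 0, K_s > 0, θ_s > θ_r, ψ_r ∈ ℝ, and let ψ : ℝ² × ℝ → ℝ be a C² function of (x, z, t). If ψ satisfies the mixed-form Richards equation ∂_t[θ_r + (θ_s − θ_r) e^{αψ}] = ∂_x[K_s e^{αψ} ∂_x ψ] + ∂_z[K_s e^{αψ} (∂_z ψ + 1)], then the Kirchhoff variable h̄ = e^{αψ} − e^{αψ_r} satisfies the linear convection–diffusion equation ∂_xx h̄ + ∂_zz h̄ + α ∂_z h̄ = c ∂_t h̄ with c = α(θ_s − θ_r)/K_s. -/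
/-- Partial derivative in the first coordinate `x` of a function on `ℝ × ℝ × ℝ`
(coordinates `(x, z, t)`). -/
noncomputable def dX (u : ℝ × ℝ × ℝ → ℝ) (x z t : ℝ) : ℝ :=
  deriv (fun s => u (s, z, t)) x

/-- Partial derivative in the second coordinate `z`. -/
noncomputable def dZ (u : ℝ × ℝ × ℝ → ℝ) (x z t : ℝ) : ℝ :=
  deriv (fun s => u (x, s, t)) z

/-- Partial derivative in the third coordinate `t`. -/
noncomputable def dT (u : ℝ × ℝ × ℝ → ℝ) (x z t : ℝ) : ℝ :=
  deriv (fun s => u (x, z, s)) t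

/-- Slice derivative in `x` of a differentiable function equals the full
derivative applied to `(1,0,0)`. -/
lemma hasDerivAt_sliceX (u : ℝ × ℝ × ℝ → ℝ) (hu : Differentiable ℝ u) (x z t : ℝ) :
    HasDerivAt (fun s => u (s, z, t)) (fderiv ℝ u (x, z, t) (1, 0, 0)) x := by
  have hL : HasDerivAt (fun s : ℝ => ((s, z, t) : ℝ × ℝ × ℝ)) ((1 : ℝ), (0 : ℝ), (0 : ℝ)) x :=
    HasDerivAt.prodMk (hasDerivAt_id x) (HasDerivAt.prodMk (hasDerivAt_const x z) (hasDerivAt_const x t))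
  exact (hu (x, z, t)).hasFDerivAt.comp_hasDerivAt x hL

lemma hasDerivAt_sliceZ (u : ℝ × ℝ × ℝ → ℝ) (hu : Differentiable ℝ u) (x z t : ℝ) :
    HasDerivAt (fun s => u (x, s, t)) (fderiv ℝ u (x, z, t) (0, 1, 0)) z := by
  have hL : HasDerivAt (fun s : ℝ => ((x, s, t) : ℝ × ℝ × ℝ)) ((0 : ℝ), (1 : ℝ), (0 : ℝ)) z :=
    HasDerivAt.prodMk (hasDerivAt_const z x) (HasDerivAt.prodMk (hasDerivAt_id z) (hasDerivAt_const z t))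
  exact (hu (x, z, t)).hasFDerivAt.comp_hasDerivAt z hL

lemma hasDerivAt_sliceT (u : ℝ × ℝ × ℝ → ℝ) (hu : Differentiable ℝ u) (x z t : ℝ) :
    HasDerivAt (fun s => u (x, z, s)) (fderiv ℝ u (x, z, t) (0, 0, 1)) t := by
  have hL : HasDerivAt (fun s : ℝ => ((x, z, s) : ℝ × ℝ × ℝ)) ((0 : ℝ), (0 : ℝ), (1 : ℝ)) t :=
    HasDerivAt.prodMk (hasDerivAt_const t x) (HasDerivAt.prodMk (hasDerivAt_const t z) (hasDerivAt_id t))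
  exact (hu (x, z, t)).hasFDerivAt.comp_hasDerivAt t hL

/-- **Kirchhoff linearization of Richards' equation under Gardner closures.**
If a `C²` pressure head `ψ(x,z,t)` satisfies the mixed-form Richards equation
`∂_t[θ_r + (θ_s − θ_r) e^{αψ}] = ∂_x[K_s e^{αψ} ∂_x ψ] + ∂_z[K_s e^{αψ} (∂_z ψ + 1)]`,
then the Kirchhoff variable `h̄ = e^{αψ} − e^{αψ_r}` satisfies the linear
convection–diffusion equation `∂_xx h̄ + ∂_zz h̄ + α ∂_z h̄ = c ∂_t h̄` with
`c = α(θ_s − θ_r)/K_s`. -/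
theorem kirchhoff_linearization_gardner
    (α Ks θr θs ψr : ℝ)
    (hα : 0 < α) (hKs : 0 < Ks) (hθ : θr < θs)
    (ψ : ℝ × ℝ × ℝ → ℝ)
    (hC2 : ContDiff ℝ 2 ψ)
    (hPDE : ∀ x z t : ℝ,
      dT (fun p => θr + (θs - θr) * Real.exp (α * ψ p)) x z t =
        dX (fun p => Ks * Real.exp (α * ψ p) * dX ψ p.1 p.2.1 p.2.2) x z t +
        dZ (fun p => Ks * Real.exp (α * ψ p) * (dZ ψ p.1 p.2.1 p.2.2 + 1)) x z t) :
    ∀ x z t : ℝ,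
      dX (fun p => dX (fun q => Real.exp (α * ψ q) - Real.exp (α * ψr)) p.1 p.2.1 p.2.2) x z t +
      dZ (fun p => dZ (fun q => Real.exp (α * ψ q) - Real.exp (α * ψr)) p.1 p.2.1 p.2.2) x z t +
      α * dZ (fun q => Real.exp (α * ψ q) - Real.exp (α * ψr)) x z t =
      α * (θs - θr) / Ks *
        dT (fun q => Real.exp (α * ψ q) - Real.exp (α * ψr)) x z t := by
  have hα' : α ≠ 0 := ne_of_gt hα
  have hKs' : Ks ≠ 0 := ne_of_gt hKs
  set h : ℝ × ℝ × ℝ → ℝ := fun q => Real.exp (α * ψ q) - Real.exp (α * ψr) with hdef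
  have hψd : Differentiable ℝ ψ := hC2.differentiable two_ne_zero
  have hhC2 : ContDiff ℝ 2 h :=
    (Real.contDiff_exp.comp (contDiff_const.mul hC2)).sub contDiff_const
  have hhd : Differentiable ℝ h := hhC2.differentiable two_ne_zero
  -- first derivatives of h along slices
  have hXh : ∀ x z t : ℝ, HasDerivAt (fun s => h (s, z, t))
      (α * Real.exp (α * ψ (x, z, t)) * dX ψ x z t) x := by
    intro x z t
    have hs := hasDerivAt_sliceX ψ hψd x z t
    have hd : dX ψ x z t = fderiv ℝ ψ (x, z, t) (1, 0, 0) := hs.deriv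
    have h1 : HasDerivAt (fun s => α * ψ (s, z, t)) (α * dX ψ x z t) x := by
      rw [hd]; exact hs.const_mul α
    have h3 := (h1.exp).sub_const (Real.exp (α * ψr))
    refine h3.congr_deriv ?_
    ring
  have hZh : ∀ x z t : ℝ, HasDerivAt (fun s => h (x, s, t))
      (α * Real.exp (α * ψ (x, z, t)) * dZ ψ x z t) z := by
    intro x z t
    have hs := hasDerivAt_sliceZ ψ hψd x z t
    have hd : dZ ψ x z t = fderiv ℝ ψ (x, z, t) (0, 1, 0) := hs.deriv
    have h1 : HasDerivAt (fun s => α * ψ (x, s, t)) (α * dZ ψ x z t) z := by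
      rw [hd]; exact hs.const_mul α
    have h3 := (h1.exp).sub_const (Real.exp (α * ψr))
    refine h3.congr_deriv ?_
    ring
  -- the first-order partials of h as functions
  set H1 : ℝ × ℝ × ℝ → ℝ := fun p => fderiv ℝ h p (1, 0, 0) with hH1def
  set H2 : ℝ × ℝ × ℝ → ℝ := fun p => fderiv ℝ h p (0, 1, 0) with hH2def
  have hfd : ContDiff ℝ 1 (fderiv ℝ h) := hhC2.fderiv_right (by norm_num)
  have hH2d : Differentiable ℝ H2 :=
    (hfd.clm_apply contDiff_const).differentiable one_ne_zero
  have hdXh_fun : (fun p : ℝ × ℝ × ℝ => dX h p.1 p.2.1 p.2.2) = H1 :=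
    funext fun p => (hasDerivAt_sliceX h hhd p.1 p.2.1 p.2.2).deriv
  have hdZh_fun : (fun p : ℝ × ℝ × ℝ => dZ h p.1 p.2.1 p.2.2) = H2 :=
    funext fun p => (hasDerivAt_sliceZ h hhd p.1 p.2.1 p.2.2).deriv
  -- pointwise values of H1, H2
  have hH1val : ∀ p : ℝ × ℝ × ℝ, H1 p = α * Real.exp (α * ψ p) * dX ψ p.1 p.2.1 p.2.2 := by
    intro p
    have e1 := (hasDerivAt_sliceX h hhd p.1 p.2.1 p.2.2).deriv
    have e2 := (hXh p.1 p.2.1 p.2.2).deriv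
    exact e1.symm.trans e2
  have hH2val : ∀ p : ℝ × ℝ × ℝ, H2 p = α * Real.exp (α * ψ p) * dZ ψ p.1 p.2.1 p.2.2 := by
    intro p
    have e1 := (hasDerivAt_sliceZ h hhd p.1 p.2.1 p.2.2).deriv
    have e2 := (hZh p.1 p.2.1 p.2.2).deriv
    exact e1.symm.trans e2
  intro x z t
  -- rewrite PDE flux terms
  have hFx : (fun p : ℝ × ℝ × ℝ => Ks * Real.exp (α * ψ p) * dX ψ p.1 p.2.1 p.2.2) =
      fun p => (Ks / α) * H1 p := by
    funext p
    rw [hH1val p]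
    field_simp
  have hFz : (fun p : ℝ × ℝ × ℝ => Ks * Real.exp (α * ψ p) * (dZ ψ p.1 p.2.1 p.2.2 + 1)) =
      fun p => (Ks / α) * H2 p + (Ks * h p + Ks * Real.exp (α * ψr)) := by
    funext p
    rw [hH2val p, hdef]
    field_simp
    ring
  have hFt : (fun p : ℝ × ℝ × ℝ => θr + (θs - θr) * Real.exp (α * ψ p)) =
      fun p => (θs - θr) * h p + (θr + (θs - θr) * Real.exp (α * ψr)) := by
    funext p
    rw [hdef]
    ring
  -- compute the three derivatives appearing in the PDE
  have eX : dX (fun p : ℝ × ℝ × ℝ => Ks * Real.exp (α * ψ p) * dX ψ p.1 p.2.1 p.2.2) x z t =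
      (Ks / α) * dX H1 x z t := by
    rw [hFx]
    simp only [dX, deriv_const_mul_field]
  have eZ : dZ (fun p : ℝ × ℝ × ℝ => Ks * Real.exp (α * ψ p) * (dZ ψ p.1 p.2.1 p.2.2 + 1)) x z t =
      (Ks / α) * fderiv ℝ H2 (x, z, t) (0, 1, 0) + Ks * fderiv ℝ h (x, z, t) (0, 1, 0) := by
    rw [hFz]
    have d1 := (hasDerivAt_sliceZ H2 hH2d x z t).const_mul (Ks / α)
    have d2 := ((hasDerivAt_sliceZ h hhd x z t).const_mul Ks).add_const
      (Ks * Real.exp (α * ψr))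
    exact (d1.add d2).deriv
  have eT : dT (fun p : ℝ × ℝ × ℝ => θr + (θs - θr) * Real.exp (α * ψ p)) x z t =
      (θs - θr) * fderiv ℝ h (x, z, t) (0, 0, 1) := by
    rw [hFt]
    have d1 := ((hasDerivAt_sliceT h hhd x z t).const_mul (θs - θr)).add_const
      (θr + (θs - θr) * Real.exp (α * ψr))
    exact d1.deriv
  have key := hPDE x z t
  rw [eX, eZ, eT] at key
  -- rewrite the goal
  rw [hdXh_fun, hdZh_fun]
  have gZ2 : dZ H2 x z t = fderiv ℝ H2 (x, z, t) (0, 1, 0) :=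
    (hasDerivAt_sliceZ H2 hH2d x z t).deriv
  have gZ1 : dZ h x z t = fderiv ℝ h (x, z, t) (0, 1, 0) :=
    (hasDerivAt_sliceZ h hhd x z t).deriv
  have gT : dT h x z t = fderiv ℝ h (x, z, t) (0, 0, 1) :=
    (hasDerivAt_sliceT h hhd x z t).deriv
  rw [gZ2, gZ1, gT]
  field_simp at key ⊢
  linarith [key]
end

section
/- The Tracy steady-state Kirchhoff variable solves the steady linearized Richards equation: for a, L, α > 0, h̄₀ ∈ ℝ, β₁ = √(α²/4 + (2π/a)²), the function h̄_ss(x, z) = (h̄₀/2) e^{(α/2)(L − z)} [ sinh(αz/2)/sinh(αL/2) − cos(2πx/a) · sinh(β₁ z)/sinh(β₁ L) ] satisfies ∂_xx h̄_ss + ∂_zz h̄_ss + α ∂_z h̄_ss = 0 at every point (x, z) ∈ ℝ². -/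
/-- **The Tracy steady-state Kirchhoff variable solves the steady linearized
Richards equation.** For `a, L, α > 0`, `h̄₀ ∈ ℝ`,
`β₁ = √(α²/4 + (2π/a)²)`, the function
`h̄_ss(x,z) = (h̄₀/2) e^{(α/2)(L−z)} [sinh(αz/2)/sinh(αL/2)
  − cos(2πx/a)·sinh(β₁z)/sinh(β₁L)]`
satisfies `∂_xx h̄_ss + ∂_zz h̄_ss + α ∂_z h̄_ss = 0` at every `(x,z) ∈ ℝ²`. -/
theorem tracy_steady_state_solves_linearized_richards
    (a L α ψr h0 : ℝ)
    (ha : 0 < a) (hL : 0 < L) (hα : 0 < α)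
    (hh0 : h0 = 1 - Real.exp (α * ψr)) :
    let β₁ : ℝ := Real.sqrt (α ^ 2 / 4 + (2 * Real.pi / a) ^ 2)
    let hss : ℝ → ℝ → ℝ := fun x z =>
      h0 / 2 * Real.exp (α / 2 * (L - z)) *
        (Real.sinh (α / 2 * z) / Real.sinh (α / 2 * L) -
          Real.cos (2 * Real.pi * x / a) * (Real.sinh (β₁ * z) / Real.sinh (β₁ * L)))
    ∀ x z : ℝ,
      deriv (fun s => deriv (fun s' => hss s' z) s) x +
      deriv (fun s => deriv (fun s' => hss x s') s) z +
      α * deriv (fun s => hss x s) z = 0 := by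
  intro β₁ hss x z
  have hβsq : β₁ ^ 2 = α ^ 2 / 4 + (2 * Real.pi / a) ^ 2 :=
    Real.sq_sqrt (by positivity)
  set C : ℝ := h0 / 2 with hC
  set S1 : ℝ := Real.sinh (α / 2 * L) with hS1
  set S2 : ℝ := Real.sinh (β₁ * L) with hS2
  set cx : ℝ := Real.cos (2 * Real.pi * x / a) with hcx
  set c3 : ℝ := C * Real.exp (α / 2 * (L - z)) * (Real.sinh (β₁ * z) / S2) * (2 * Real.pi / a)
    with hc3
  have hlin : ∀ s : ℝ, HasDerivAt (fun s' : ℝ => 2 * Real.pi * s' / a) (2 * Real.pi / a) s := by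
    intro s
    simpa using ((hasDerivAt_id s).const_mul (2 * Real.pi)).div_const a
  have hlin2 : ∀ c : ℝ, ∀ s : ℝ, HasDerivAt (fun s' : ℝ => c * s') c s := by
    intro c s
    simpa using (hasDerivAt_id s).const_mul c
  have hexp : ∀ s : ℝ, HasDerivAt (fun s' : ℝ => Real.exp (α / 2 * (L - s')))
      (Real.exp (α / 2 * (L - s)) * -(α / 2)) s := by
    intro s
    have h1 : HasDerivAt (fun s' : ℝ => α / 2 * (L - s')) (-(α / 2)) s := by
      simpa using ((hasDerivAt_id s).const_sub L).const_mul (α / 2)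
    exact h1.exp
  -- x-derivative
  have hx1 : ∀ s : ℝ, HasDerivAt (fun s' => hss s' z) (c3 * Real.sin (2 * Real.pi * s / a)) s := by
    intro s
    have h := (((hlin s).cos.mul_const (Real.sinh (β₁ * z) / S2)).const_sub
      (Real.sinh (α / 2 * z) / S1)).const_mul (C * Real.exp (α / 2 * (L - z)))
    refine h.congr_deriv ?_
    simp only [hc3]; ring
  have hx2 : HasDerivAt (fun s : ℝ => c3 * Real.sin (2 * Real.pi * s / a))
      (c3 * (Real.cos (2 * Real.pi * x / a) * (2 * Real.pi / a))) x :=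
    ((hlin x).sin).const_mul c3
  -- z-derivative
  set D1 : ℝ → ℝ := fun s =>
      (C * Real.exp (α / 2 * (L - s)) * -(α / 2)) *
        (Real.sinh (α / 2 * s) / S1 - cx * (Real.sinh (β₁ * s) / S2)) +
      (C * Real.exp (α / 2 * (L - s))) *
        (Real.cosh (α / 2 * s) * (α / 2) / S1 - cx * (Real.cosh (β₁ * s) * β₁ / S2)) with hD1
  have hbr : ∀ s : ℝ, HasDerivAt
      (fun s' => Real.sinh (α / 2 * s') / S1 - cx * (Real.sinh (β₁ * s') / S2))
      (Real.cosh (α / 2 * s) * (α / 2) / S1 - cx * (Real.cosh (β₁ * s) * β₁ / S2)) s := by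
    intro s
    exact (((hlin2 (α / 2) s).sinh).div_const S1).sub
      ((((hlin2 β₁ s).sinh).div_const S2).const_mul cx)
  have hbr' : HasDerivAt
      (fun s' => Real.cosh (α / 2 * s') * (α / 2) / S1 - cx * (Real.cosh (β₁ * s') * β₁ / S2))
      ((Real.sinh (α / 2 * z) * (α / 2)) * (α / 2) / S1 -
        cx * ((Real.sinh (β₁ * z) * β₁) * β₁ / S2)) z :=
    ((((hlin2 (α / 2) z).cosh).mul_const (α / 2)).div_const S1).sub
      (((((hlin2 β₁ z).cosh).mul_const β₁).div_const S2).const_mul cx)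
  have hz1 : ∀ s : ℝ, HasDerivAt (fun s' => hss x s') (D1 s) s := by
    intro s
    have h := ((hexp s).const_mul C).mul (hbr s)
    refine h.congr_deriv ?_
    simp only [hD1]; ring
  set D2 : ℝ :=
      ((C * (Real.exp (α / 2 * (L - z)) * -(α / 2))) * -(α / 2)) *
        (Real.sinh (α / 2 * z) / S1 - cx * (Real.sinh (β₁ * z) / S2)) +
      (C * Real.exp (α / 2 * (L - z)) * -(α / 2)) *
        (Real.cosh (α / 2 * z) * (α / 2) / S1 - cx * (Real.cosh (β₁ * z) * β₁ / S2)) +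
      ((C * (Real.exp (α / 2 * (L - z)) * -(α / 2))) *
        (Real.cosh (α / 2 * z) * (α / 2) / S1 - cx * (Real.cosh (β₁ * z) * β₁ / S2)) +
      (C * Real.exp (α / 2 * (L - z))) *
        ((Real.sinh (α / 2 * z) * (α / 2)) * (α / 2) / S1 -
          cx * ((Real.sinh (β₁ * z) * β₁) * β₁ / S2))) with hD2def
  have hz2 : HasDerivAt D1 D2 z := by
    have h := (((((hexp z).const_mul C).mul_const (-(α / 2))).mul (hbr z)).add
      (((hexp z).const_mul C).mul hbr'))
    exact h
  have e1 : deriv (fun s => deriv (fun s' => hss s' z) s) x =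
      c3 * (Real.cos (2 * Real.pi * x / a) * (2 * Real.pi / a)) := by
    rw [funext fun s => (hx1 s).deriv]
    exact hx2.deriv
  have e2 : deriv (fun s => hss x s) z = D1 z := (hz1 z).deriv
  have e3 : deriv (fun s => deriv (fun s' => hss x s') s) z = D2 := by
    rw [funext fun s => (hz1 s).deriv]
    exact hz2.deriv
  rw [e1, e2, e3]
  simp only [hD1, hD2def, hc3, ← hcx]
  linear_combination (-(C * Real.exp (α / 2 * (L - z)) * cx * Real.sinh (β₁ * z) / S2)) * hβsq
end

section
/- Preservation of physical bounds by the FCT scheme: if every low-order nodal value satisfies θ_r < θ_j^L < θ_s and the local bounds are chosen as θ_i^min = min_{j ∈ N_i} θ_j^L and θ_i^max = max_{j ∈ N_i} θ_j^L over a nonempty neighbor stencil N_i containing i, then the flux-corrected moisture content θ_i^{n+1} = θ_i^L + (Δt/m_i) Σ_{j≠i} α_ij f_ij produced by Zalesak's limiter satisfies θ_r < θ_i^{n+1} < θ_s for every node i, ensuring consistency with the soil water retention model. -/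
/-- **Preservation of physical bounds by the FCT scheme.** If every low-order
nodal value satisfies `θ_r < θ_j^L < θ_s` and the local bounds are chosen as
`θ_i^min = min_{j ∈ N_i} θ_j^L` and `θ_i^max = max_{j ∈ N_i} θ_j^L` over a
nonempty neighbor stencil `N_i` containing `i`, then the flux-corrected
moisture content `θ_i^{n+1} = θ_i^L + (Δt/m_i) Σ_{j≠i} α_ij f_ij` produced by
Zalesak's limiter satisfies `θ_r < θ_i^{n+1} < θ_s` for every node `i`. -/
theorem fct_preserves_physical_bounds
    (N : ℕ) (θr θs : ℝ) (hrs : θr < θs)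
    (stencil : Fin N → Finset (Fin N))
    (hstencil : ∀ i, i ∈ stencil i)
    (m θL θmin θmax : Fin N → ℝ) (Δt : ℝ)
    (f : Fin N → Fin N → ℝ)
    (Pp Pm Qp Qm Rp Rm : Fin N → ℝ)
    (α : Fin N → Fin N → ℝ)
    (θnew : Fin N → ℝ)
    (hm : ∀ i, 0 < m i) (hΔt : 0 < Δt)
    (hskew : ∀ i j, i ≠ j → f j i = - f i j)
    (hLbounds : ∀ j, θr < θL j ∧ θL j < θs)
    (hθmin : ∀ i, θmin i = (stencil i).inf' ⟨i, hstencil i⟩ θL)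
    (hθmax : ∀ i, θmax i = (stencil i).sup' ⟨i, hstencil i⟩ θL)
    (hPp : ∀ i, Pp i = ∑ j ∈ Finset.univ.erase i, max (f i j) 0)
    (hPm : ∀ i, Pm i = ∑ j ∈ Finset.univ.erase i, min (f i j) 0)
    (hQp : ∀ i, Qp i = m i / Δt * (θmax i - θL i))
    (hQm : ∀ i, Qm i = m i / Δt * (θmin i - θL i))
    (hRp : ∀ i, Rp i = if 0 < Pp i then min 1 (Qp i / Pp i) else 1)
    (hRm : ∀ i, Rm i = if Pm i < 0 then min 1 (Qm i / Pm i) else 1)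
    (hα : ∀ i j, α i j =
      if 0 < f i j then min (Rp i) (Rm j)
      else if f i j < 0 then min (Rm i) (Rp j)
      else 1)
    (hθnew : ∀ i, θnew i = θL i + Δt / m i * ∑ j ∈ Finset.univ.erase i, α i j * f i j) :
    ∀ i, θr < θnew i ∧ θnew i < θs := by
  intro i
  have hmΔ : ∀ k, 0 ≤ m k / Δt := fun k => (div_pos (hm k) hΔt).le
  have hθmaxge : ∀ k, θL k ≤ θmax k := fun k => by
    rw [hθmax]; exact Finset.le_sup' θL (hstencil k)
  have hθminle : ∀ k, θmin k ≤ θL k := fun k => by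
    rw [hθmin]; exact Finset.inf'_le θL (hstencil k)
  have hQp0 : ∀ k, 0 ≤ Qp k := fun k => by
    rw [hQp]; exact mul_nonneg (hmΔ k) (sub_nonneg.mpr (hθmaxge k))
  have hQm0 : ∀ k, Qm k ≤ 0 := fun k => by
    rw [hQm]; exact mul_nonpos_of_nonneg_of_nonpos (hmΔ k) (sub_nonpos.mpr (hθminle k))
  have hRp01 : ∀ k, 0 ≤ Rp k ∧ Rp k ≤ 1 := fun k => by
    rw [hRp]; split_ifs with h
    · exact ⟨le_min zero_le_one (div_nonneg (hQp0 k) h.le), min_le_left _ _⟩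
    · exact ⟨zero_le_one, le_refl 1⟩
  have hRm01 : ∀ k, 0 ≤ Rm k ∧ Rm k ≤ 1 := fun k => by
    rw [hRm]; split_ifs with h
    · refine ⟨le_min zero_le_one ?_, min_le_left _ _⟩
      rw [div_nonneg_iff]; exact Or.inr ⟨hQm0 k, h.le⟩
    · exact ⟨zero_le_one, le_refl 1⟩
  have hα0 : ∀ j, 0 ≤ α i j := fun j => by
    rw [hα]; split_ifs
    · exact le_min (hRp01 i).1 (hRm01 j).1
    · exact le_min (hRm01 i).1 (hRp01 j).1
    · exact zero_le_one
  set S := ∑ j ∈ Finset.univ.erase i, α i j * f i j with hS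
  -- upper bound on S
  have hS_le : S ≤ Rp i * Pp i := by
    rw [hPp, Finset.mul_sum]
    refine Finset.sum_le_sum fun j _ => ?_
    rcases lt_trichotomy (f i j) 0 with h | h | h
    · have : α i j * f i j ≤ 0 := mul_nonpos_of_nonneg_of_nonpos (hα0 j) h.le
      calc α i j * f i j ≤ 0 := this
        _ ≤ Rp i * max (f i j) 0 := by
            rw [max_eq_right h.le, mul_zero]
    · simp [h]
    · rw [max_eq_left h.le, hα, if_pos h]
      exact mul_le_mul_of_nonneg_right (min_le_left _ _) h.le
  have hS_ge : Rm i * Pm i ≤ S := by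
    rw [hPm, Finset.mul_sum]
    refine Finset.sum_le_sum fun j _ => ?_
    rcases lt_trichotomy (f i j) 0 with h | h | h
    · rw [min_eq_left h.le, hα, if_neg (not_lt.mpr h.le), if_pos h]
      exact mul_le_mul_of_nonpos_right (min_le_left _ _) h.le
    · simp [h]
    · calc Rm i * min (f i j) 0 ≤ 0 := by
            rw [min_eq_right h.le, mul_zero]
        _ ≤ α i j * f i j := mul_nonneg (hα0 j) h.le
  have hPp0 : 0 ≤ Pp i := by
    rw [hPp]; exact Finset.sum_nonneg fun j _ => le_max_right _ _
  have hPm0 : Pm i ≤ 0 := by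
    rw [hPm]; exact Finset.sum_nonpos fun j _ => min_le_right _ _
  have hRpPp : Rp i * Pp i ≤ Qp i := by
    rcases hPp0.lt_or_eq with h | h
    · have hRle : Rp i ≤ Qp i / Pp i := by rw [hRp, if_pos h]; exact min_le_right _ _
      calc Rp i * Pp i ≤ Qp i / Pp i * Pp i :=
            mul_le_mul_of_nonneg_right hRle h.le
        _ = Qp i := div_mul_cancel₀ _ h.ne'
    · rw [← h, mul_zero]; exact hQp0 i
  have hRmPm : Qm i ≤ Rm i * Pm i := by
    rcases hPm0.lt_or_eq with h | h
    · have hRle : Rm i ≤ Qm i / Pm i := by rw [hRm, if_pos h]; exact min_le_right _ _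
      calc Qm i = Qm i / Pm i * Pm i := (div_mul_cancel₀ _ h.ne).symm
        _ ≤ Rm i * Pm i := mul_le_mul_of_nonpos_right hRle h.le
    · rw [h, mul_zero]; exact hQm0 i
  have hpos : 0 < Δt / m i := div_pos hΔt (hm i)
  have hup : Δt / m i * S ≤ θmax i - θL i := by
    have h1 : Δt / m i * S ≤ Δt / m i * Qp i :=
      mul_le_mul_of_nonneg_left (hS_le.trans hRpPp) hpos.le
    have h2 : Δt / m i * Qp i = θmax i - θL i := by
      have h3 := (hm i).ne'; have h4 := hΔt.ne'; rw [hQp]; field_simp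
    linarith
  have hlo : θmin i - θL i ≤ Δt / m i * S := by
    have h1 : Δt / m i * Qm i ≤ Δt / m i * S :=
      mul_le_mul_of_nonneg_left (hRmPm.trans hS_ge) hpos.le
    have h2 : Δt / m i * Qm i = θmin i - θL i := by
      have h3 := (hm i).ne'; have h4 := hΔt.ne'; rw [hQm]; field_simp
    linarith
  have hmaxlt : θmax i < θs := by
    rw [hθmax]; exact (Finset.sup'_lt_iff _).mpr fun j _ => (hLbounds j).2
  have hminlt : θr < θmin i := by
    rw [hθmin]; exact (Finset.lt_inf'_iff _).mpr fun j _ => (hLbounds j).1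
  rw [hθnew]
  constructor <;> linarith
end
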